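/- arXiv:2104.13106 — 6 statements merged into one kernel-verified Lean document; each statement's English description precedes it below -/
import Mathlib

section
/- If π is a trim optimal plan between discrete measures μ and ν, and π = π⁽¹⁾ + π⁽²⁾ where π⁽¹⁾, π⁽²⁾ are nonnegative with disjoint supports, then π⁽¹⁾ and π⁽²⁾ are each trim optimal plans between their own marginals. -/
open Finset

/-- A transportation plan between discrete measures `μ` and `ν`. -/
def IsPlan {X : Type*} [Fintype X] (μ ν : X → ℝ) (π : X → X → ℝ) : Prop :=
  (∀ x y, 0 ≤ π x y) ∧ (∀ x, ∑ y, π x y = μ x) ∧ (∀ y, ∑ x, π x y = ν y)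

/-- Total transport cost of a plan. -/
noncomputable def tcost {X : Type*} [Fintype X] (c π : X → X → ℝ) : ℝ :=
  ∑ x, ∑ y, c x y * π x y

open Classical in
/-- Support of a plan, as a finite set of pairs. -/
noncomputable def spt {X : Type*} [Fintype X] (π : X → X → ℝ) : Finset (X × X) :=
  Finset.univ.filter (fun p => π p.1 p.2 ≠ 0)

open Classical in
/-- Support of a discrete measure. -/
noncomputable def msupp {X : Type*} [Fintype X] (μ : X → ℝ) : Finset X :=
  Finset.univ.filter (fun x => μ x ≠ 0)

/-- An optimal transportation plan. -/
def IsOptimal {X : Type*} [Fintype X] (c : X → X → ℝ) (μ ν : X → ℝ) (π : X → X → ℝ) : Prop :=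
  IsPlan μ ν π ∧ ∀ π' : X → X → ℝ, IsPlan μ ν π' → tcost c π ≤ tcost c π'

/-- A trim plan: optimal with support of minimal cardinality among optimal plans. -/
def IsTrim {X : Type*} [Fintype X] (c : X → X → ℝ) (μ ν : X → ℝ) (π : X → X → ℝ) : Prop :=
  IsOptimal c μ ν π ∧
    ∀ π' : X → X → ℝ, IsOptimal c μ ν π' → (spt π).card ≤ (spt π').card

/-- `L^∞` norm of the cost with respect to a plan: max of `c` on the support. -/
noncomputable def linf {X : Type*} [Fintype X] (c π : X → X → ℝ) : ℝ :=
  WithBot.unbotD 0 (((spt π).image (fun p => c p.1 p.2)).max)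

/-- Optimal transport cost `W_c(μ,ν)`. -/
noncomputable def Wc {X : Type*} [Fintype X] (c : X → X → ℝ) (μ ν : X → ℝ) : ℝ :=
  sInf {r | ∃ π, IsPlan μ ν π ∧ tcost c π = r}

/-- Infinity-Wasserstein cost `W_c^{(∞)}(μ,ν)`. -/
noncomputable def Winf {X : Type*} [Fintype X] (c : X → X → ℝ) (μ ν : X → ℝ) : ℝ :=
  sInf {r | ∃ π, IsPlan μ ν π ∧ linf c π = r}

/-- The deterministic plan `(Id, h)_# σ`. -/
def pushF {X : Type*} [DecidableEq X] (h : X → X) (σ : X → ℝ) : X → X → ℝ :=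
  fun x y => if h x = y then σ x else 0

/-- The deterministic plan `(h, Id)_# σ`. -/
def pushB {X : Type*} [DecidableEq X] (h : X → X) (σ : X → ℝ) : X → X → ℝ :=
  fun x y => if h y = x then σ y else 0

/-! Replacing the summand `π₁` of a trim plan `π₁ + π₂` by any plan `π₁'` with the same marginals
gives a plan `π₁' + π₂` with the marginals of `π`. Optimality of `π` then forces `π₁` to be
optimal, and since disjointness makes `|spt π| = |spt π₁| + |spt π₂|` while always
`|spt (π₁' + π₂)| ≤ |spt π₁'| + |spt π₂|`, minimality of `|spt π|` forces `|spt π₁| ≤ |spt π₁'|`. -/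

section

variable {X : Type*} [Fintype X]

lemma tcost_add (c π σ : X → X → ℝ) : tcost c (π + σ) = tcost c π + tcost c σ := by
  simp only [tcost, Pi.add_apply, mul_add, sum_add_distrib]

lemma isPlan_marginals {π : X → X → ℝ} (hπ : ∀ x y, 0 ≤ π x y) :
    IsPlan (fun x => ∑ y, π x y) (fun y => ∑ x, π x y) π :=
  ⟨hπ, fun _ => rfl, fun _ => rfl⟩

lemma IsPlan.eq_marginals {μ ν : X → ℝ} {π : X → X → ℝ} (h : IsPlan μ ν π) :
    μ = (fun x => ∑ y, π x y) ∧ ν = (fun y => ∑ x, π x y) :=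
  ⟨funext fun x => (h.2.1 x).symm, funext fun y => (h.2.2 y).symm⟩

lemma IsPlan.add {μ ν μ' ν' : X → ℝ} {π σ : X → X → ℝ}
    (hπ : IsPlan μ ν π) (hσ : IsPlan μ' ν' σ) : IsPlan (μ + μ') (ν + ν') (π + σ) := by
  obtain ⟨hπ₀, hπμ, hπν⟩ := hπ
  obtain ⟨hσ₀, hσμ, hσν⟩ := hσ
  refine ⟨fun x y => add_nonneg (hπ₀ x y) (hσ₀ x y), fun x => ?_, fun y => ?_⟩
  · simp only [Pi.add_apply, sum_add_distrib, hπμ, hσμ]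
  · simp only [Pi.add_apply, sum_add_distrib, hπν, hσν]

lemma IsPlan.replace_left {μ ν : X → ℝ} {π₁ π₂ π₁' : X → X → ℝ}
    (h : IsPlan μ ν (π₁ + π₂)) (h₂ : ∀ x y, 0 ≤ π₂ x y)
    (h₁' : IsPlan (fun x => ∑ y, π₁ x y) (fun y => ∑ x, π₁ x y) π₁') :
    IsPlan μ ν (π₁' + π₂) := by
  obtain ⟨rfl, rfl⟩ := h.eq_marginals
  convert h₁'.add (isPlan_marginals h₂) using 1 <;>
    exact funext fun _ => by simp only [Pi.add_apply, sum_add_distrib]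

lemma spt_add_subset [DecidableEq X] (π σ : X → X → ℝ) : spt (π + σ) ⊆ spt π ∪ spt σ := by
  intro p hp
  simp only [spt, mem_union, mem_filter, mem_univ, true_and, Pi.add_apply] at hp ⊢
  contrapose! hp
  rw [hp.1, hp.2, add_zero]

lemma spt_add_of_nonneg [DecidableEq X] {π σ : X → X → ℝ} (hπ : ∀ x y, 0 ≤ π x y)
    (hσ : ∀ x y, 0 ≤ σ x y) : spt (π + σ) = spt π ∪ spt σ := by
  refine (spt_add_subset π σ).antisymm fun p hp => ?_
  simp only [spt, mem_union, mem_filter, mem_univ, true_and, Pi.add_apply] at hp ⊢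
  have := hπ p.1 p.2
  have := hσ p.1 p.2
  rcases hp with hp | hp <;> intro h <;> apply hp <;> linarith

lemma card_spt_add_le (π σ : X → X → ℝ) : #(spt (π + σ)) ≤ #(spt π) + #(spt σ) := by
  classical
  exact (card_le_card (spt_add_subset π σ)).trans (card_union_le _ _)

lemma card_spt_add_of_disjoint {π σ : X → X → ℝ} (hπ : ∀ x y, 0 ≤ π x y)
    (hσ : ∀ x y, 0 ≤ σ x y) (hdisj : Disjoint (spt π) (spt σ)) :
    #(spt (π + σ)) = #(spt π) + #(spt σ) := by
  classical
  rw [spt_add_of_nonneg hπ hσ, card_union_of_disjoint hdisj]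

lemma IsOptimal.left_of_add {c : X → X → ℝ} {μ ν : X → ℝ} {π₁ π₂ : X → X → ℝ}
    (hopt : IsOptimal c μ ν (π₁ + π₂)) (h₁ : ∀ x y, 0 ≤ π₁ x y) (h₂ : ∀ x y, 0 ≤ π₂ x y) :
    IsOptimal c (fun x => ∑ y, π₁ x y) (fun y => ∑ x, π₁ x y) π₁ := by
  refine ⟨isPlan_marginals h₁, fun π₁' h₁' => ?_⟩
  have := hopt.2 _ (hopt.1.replace_left h₂ h₁')
  rw [tcost_add, tcost_add] at this
  linarith

lemma IsTrim.left_of_add {c : X → X → ℝ} {μ ν : X → ℝ} {π₁ π₂ : X → X → ℝ}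
    (htrim : IsTrim c μ ν (π₁ + π₂)) (h₁ : ∀ x y, 0 ≤ π₁ x y) (h₂ : ∀ x y, 0 ≤ π₂ x y)
    (hdisj : Disjoint (spt π₁) (spt π₂)) :
    IsTrim c (fun x => ∑ y, π₁ x y) (fun y => ∑ x, π₁ x y) π₁ := by
  obtain ⟨hopt, hmin⟩ := htrim
  refine ⟨hopt.left_of_add h₁ h₂, fun π₁' hopt₁' => ?_⟩
  have hplan' : IsPlan μ ν (π₁' + π₂) := hopt.1.replace_left h₂ hopt₁'.1
  have hopt' : IsOptimal c μ ν (π₁' + π₂) := by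
    refine ⟨hplan', fun σ hσ => le_trans ?_ (hopt.2 σ hσ)⟩
    rw [tcost_add, tcost_add]
    linarith [hopt₁'.2 π₁ (isPlan_marginals h₁)]
  have := hmin _ hopt'
  rw [card_spt_add_of_disjoint h₁ h₂ hdisj] at this
  linarith [card_spt_add_le π₁' π₂]

end

theorem trim_of_disjoint_split_general {X : Type*} [Fintype X]
    (μ ν : X → ℝ) (c : X → X → ℝ) (π π₁ π₂ : X → X → ℝ)
    (htrim : IsTrim c μ ν π)
    (h1 : ∀ x y, 0 ≤ π₁ x y) (h2 : ∀ x y, 0 ≤ π₂ x y)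
    (hsum : ∀ x y, π x y = π₁ x y + π₂ x y)
    (hdisj : Disjoint (spt π₁) (spt π₂)) :
    IsTrim c (fun x => ∑ y, π₁ x y) (fun y => ∑ x, π₁ x y) π₁ ∧
      IsTrim c (fun x => ∑ y, π₂ x y) (fun y => ∑ x, π₂ x y) π₂ := by
  obtain rfl : π = π₁ + π₂ := funext fun x => funext (hsum x)
  exact ⟨htrim.left_of_add h1 h2 hdisj,
    (add_comm π₁ π₂ ▸ htrim).left_of_add h2 h1 hdisj.symm⟩

/-- if a trim plan splits as a sum of two nonnegative plans with
disjoint supports, each summand is trim between its own marginals. -/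
theorem trim_of_disjoint_split {X : Type*} [Fintype X]
    (μ ν : X → ℝ) (c : X → X → ℝ) (π π₁ π₂ : X → X → ℝ)
    (hc : ∀ x y, 0 ≤ c x y)
    (hμν : ∑ x, μ x = ∑ y, ν y)
    (htrim : IsTrim c μ ν π)
    (h1 : ∀ x y, 0 ≤ π₁ x y) (h2 : ∀ x y, 0 ≤ π₂ x y)
    (hsum : ∀ x y, π x y = π₁ x y + π₂ x y)
    (hdisj : Disjoint (spt π₁) (spt π₂)) :
    IsTrim c (fun x => ∑ y, π₁ x y) (fun y => ∑ x, π₁ x y) π₁ ∧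
      IsTrim c (fun x => ∑ y, π₂ x y) (fun y => ∑ x, π₂ x y) π₂ :=
  trim_of_disjoint_split_general μ ν c π π₁ π₂ htrim h1 h2 hsum hdisj
end

section
/- Let μ and ν be positive measures on a finite set X with equal total mass and all atoms positive, c : X × X → ℝ a cost function, and π a trim optimal plan. Then there exist decompositions μ = μ⁽ᵈ⁾ + μ⁽ᶜ⁾ and ν = ν⁽ᵈ⁾ + ν⁽ᶜ⁾ into nonnegative measures, and functions h⁽¹⁾, h⁽²⁾ : X → X, such that π = (Id, h⁽¹⁾)_#μ⁽ᵈ⁾ + (h⁽²⁾, Id)_#ν⁽ᵈ⁾, i.e., every trim plan is the sum of two deterministic plans. -/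
open Finset

/-!
If the support of a trim plan `π` contained a set `T` of pairs with at least as many elements
as `T` has rows and columns together, a dimension count would give a nonzero `η` supported on
`T` with zero marginals. Since `π` is optimal, moving from `π` along `η` or `-η` does not raise
the cost, and the step that first empties an entry of `π` gives an optimal plan with smaller
support. So every nonempty `T ⊆ spt π` has fewer elements than rows plus columns (the support is
a forest), hence contains a pair alone in its row or alone in its column. Peeling off such pairs
splits `spt π` into a graph over the rows and a graph over the columns; the restrictions of `π`
to these two parts are `(Id, h₁)_# μd` and `(h₂, Id)_# νd`.
-/

theorem exists_pos_of_ne_zero_of_sum_eq_zero {α β : Type*} [Fintype β] {η : α → β → ℝ}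
    (hη : η ≠ 0) (hrow : ∀ x, ∑ y, η x y = 0) : ∃ x y, 0 < η x y := by
  by_contra! h
  exact hη <| funext fun x => funext fun y =>
    (sum_eq_zero_iff_of_nonpos fun y _ => h x y).1 (hrow x) y (mem_univ y)

section Perturbation

variable {X : Type*} [Fintype X] {c : X → X → ℝ} {μ ν : X → ℝ} {π η : X → X → ℝ}

theorem tcost_sub_smul (c π η : X → X → ℝ) (t : ℝ) :
    tcost c (π - t • η) = tcost c π - t * tcost c η := by
  simp [tcost, mul_sub, mul_sum, mul_left_comm]

theorem IsPlan.sub_smul (hπ : IsPlan μ ν π) (hrow : ∀ x, ∑ y, η x y = 0)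
    (hcol : ∀ y, ∑ x, η x y = 0) {t : ℝ} (hle : ∀ x y, t * η x y ≤ π x y) :
    IsPlan μ ν (π - t • η) := by
  obtain ⟨-, hμ, hν⟩ := hπ
  refine ⟨fun x y => by simpa using hle x y, fun x => ?_, fun y => ?_⟩
  · simp [sum_sub_distrib, ← mul_sum, hμ, hrow]
  · simp [sum_sub_distrib, ← mul_sum, hν, hcol]

theorem IsTrim.eq_zero_of_marginals_eq_zero (htrim : IsTrim c μ ν π)
    (hsupp : ∀ x y, π x y = 0 → η x y = 0) (hrow : ∀ x, ∑ y, η x y = 0)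
    (hcol : ∀ y, ∑ x, η x y = 0) : η = 0 := by
  wlog hD : 0 ≤ tcost c η generalizing η
  · refine neg_eq_zero.1 (this (fun x y h => by simp [hsupp x y h]) (by simpa) (by simpa) ?_)
    simp only [tcost, Pi.neg_apply, mul_neg, sum_neg_distrib]
    exact neg_nonneg.2 (le_of_not_ge hD)
  by_contra hη
  obtain ⟨⟨hplan, hopt⟩, hmin⟩ := htrim
  obtain ⟨x₀, y₀, hpos⟩ := exists_pos_of_ne_zero_of_sum_eq_zero hη hrow
  -- `δ` is the longest step along `-η` keeping `π` nonnegative; it empties the entry `p`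
  obtain ⟨p, hp, hpmin⟩ := exists_min_image {p | 0 < η p.1 p.2}
    (fun p => π p.1 p.2 / η p.1 p.2) ⟨(x₀, y₀), by simpa using hpos⟩
  simp only [mem_filter, mem_univ, true_and] at hp hpmin
  set δ := π p.1 p.2 / η p.1 p.2
  have hδ : 0 ≤ δ := div_nonneg (hplan.1 _ _) hp.le
  have hle : ∀ x y, δ * η x y ≤ π x y := by
    intro x y
    rcases le_or_gt (η x y) 0 with h | h
    · exact (mul_nonpos_of_nonneg_of_nonpos hδ h).trans (hplan.1 x y)
    · exact (le_div_iff₀ h).1 (hpmin (x, y) h)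
  have hopt' : IsOptimal c μ ν (π - δ • η) := by
    refine ⟨hplan.sub_smul hrow hcol hle, fun σ hσ => le_trans ?_ (hopt σ hσ)⟩
    rw [tcost_sub_smul]
    linarith [mul_nonneg hδ hD]
  have hssub : spt (π - δ • η) ⊂ spt π := by
    have hsub : spt (π - δ • η) ⊆ spt π := by
      intro q
      simp only [spt, mem_filter, mem_univ, true_and, Pi.sub_apply, Pi.smul_apply, smul_eq_mul]
      intro h hπ
      simp [hπ, hsupp _ _ hπ] at h
    refine (ssubset_iff_of_subset hsub).2 ⟨p, ?_, ?_⟩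
    · simpa [spt] using fun h => hp.ne' (hsupp _ _ h)
    · simp [spt, δ, div_mul_cancel₀ _ hp.ne']
  exact (hmin _ hopt').not_gt (card_lt_card hssub)

end Perturbation

theorem exists_ne_zero_supported_marginals_eq_zero {α β : Type*} [Fintype α] [Fintype β]
    [DecidableEq α] [DecidableEq β] {T : Finset (α × β)} (hT : T.Nonempty)
    (hcard : #(T.image Prod.fst) + #(T.image Prod.snd) ≤ #T) :
    ∃ η : α → β → ℝ, η ≠ 0 ∧ (∀ x y, (x, y) ∉ T → η x y = 0) ∧
      (∀ x, ∑ y, η x y = 0) ∧ ∀ y, ∑ x, η x y = 0 := by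
  obtain ⟨a₀, ha₀⟩ := hT.image Prod.fst
  let ext : (T → ℝ) →ₗ[ℝ] α → β → ℝ :=
    { toFun e x y := if h : (x, y) ∈ T then e ⟨_, h⟩ else 0
      map_add' e e' := by ext x y; split_ifs <;> simp [*]
      map_smul' r e := by ext x y; split_ifs <;> simp [*] }
  let marg : (α → β → ℝ) →ₗ[ℝ] ((T.image Prod.fst).erase a₀ → ℝ) × (T.image Prod.snd → ℝ) :=
    { toFun η := (fun a => ∑ y, η a y, fun b => ∑ x, η x b)
      map_add' η η' := by ext <;> simp [sum_add_distrib]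
      map_smul' r η := by ext <;> simp [mul_sum] }
  -- the a₀-row is left out: it is forced by the others, rows and columns having the same total
  have hker : LinearMap.ker (marg ∘ₗ ext) ≠ ⊥ := LinearMap.ker_ne_bot_of_finrank_lt <| by
    simp only [Module.finrank_prod, Module.finrank_fintype_fun_eq_card, Fintype.card_coe,
      card_erase_of_mem ha₀]
    have := card_pos.2 ⟨a₀, ha₀⟩
    omega
  obtain ⟨e, he, he0⟩ := Submodule.exists_mem_ne_zero_of_ne_bot hker
  have hext : ∀ x y, (x, y) ∉ T → ext e x y = 0 := fun x y h => dif_neg h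
  have hcol : ∀ y, ∑ x, ext e x y = 0 := by
    intro y
    by_cases hy : y ∈ T.image Prod.snd
    · exact congrFun (congrArg Prod.snd he) ⟨y, hy⟩
    · exact sum_eq_zero fun x _ => hext x y fun h => hy (mem_image_of_mem _ h)
  have hrow : ∀ x ≠ a₀, ∑ y, ext e x y = 0 := by
    intro x hx
    by_cases hxT : x ∈ T.image Prod.fst
    · exact congrFun (congrArg Prod.fst he) ⟨x, mem_erase.2 ⟨hx, hxT⟩⟩
    · exact sum_eq_zero fun y _ => hext x y fun h => hxT (mem_image_of_mem _ h)
  refine ⟨ext e, fun h => he0 ?_, hext, fun x => ?_, hcol⟩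
  · ext p
    simpa [ext] using congrFun (congrFun h p.1.1) p.1.2
  · obtain rfl | hx := eq_or_ne x a₀
    · calc ∑ y, ext e x y = ∑ x, ∑ y, ext e x y :=
            (sum_eq_single x (fun x' _ => hrow x') (by simp)).symm
        _ = 0 := by rw [sum_comm]; exact sum_eq_zero fun y _ => hcol y
    · exact hrow x hx

theorem IsTrim.card_lt_card_image_fst_add_card_image_snd {X : Type*} [Fintype X] [DecidableEq X]
    {c : X → X → ℝ} {μ ν : X → ℝ} {π : X → X → ℝ} (htrim : IsTrim c μ ν π)
    {T : Finset (X × X)} (hT : T ⊆ spt π) (hne : T.Nonempty) :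
    #T < #(T.image Prod.fst) + #(T.image Prod.snd) := by
  by_contra! hcard
  obtain ⟨η, hη, hηT, hrow, hcol⟩ := exists_ne_zero_supported_marginals_eq_zero hne hcard
  refine hη (htrim.eq_zero_of_marginals_eq_zero (fun x y hπ => hηT x y fun h => ?_) hrow hcol)
  simpa [spt, hπ] using hT h

section Forest

variable {α β : Type*} [DecidableEq α] [DecidableEq β]

theorem exists_unique_fst_or_unique_snd {S : Finset (α × β)}
    (hS : #S < #(S.image Prod.fst) + #(S.image Prod.snd)) :
    ∃ p ∈ S, (∀ q ∈ S, q.1 = p.1 → q = p) ∨ (∀ q ∈ S, q.2 = p.2 → q = p) := by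
  by_contra! h
  have hfst : 2 * #(S.image Prod.fst) ≤ #S := mul_card_image_le_card S 2 fun a ha => by
    obtain ⟨p, hp, rfl⟩ := mem_image.1 ha
    obtain ⟨q, hq, hqp, hne⟩ := (h p hp).1
    exact one_lt_card.2 ⟨p, by simp [hp], q, by simp [hq, hqp], hne.symm⟩
  have hsnd : 2 * #(S.image Prod.snd) ≤ #S := mul_card_image_le_card S 2 fun b hb => by
    obtain ⟨p, hp, rfl⟩ := mem_image.1 hb
    obtain ⟨q, hq, hqp, hne⟩ := (h p hp).2
    exact one_lt_card.2 ⟨p, by simp [hp], q, by simp [hq, hqp], hne.symm⟩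
  omega

theorem exists_subset_injOn_fst_injOn_snd_sdiff {S : Finset (α × β)}
    (hS : ∀ T ⊆ S, T.Nonempty → #T < #(T.image Prod.fst) + #(T.image Prod.snd)) :
    ∃ F ⊆ S, Set.InjOn Prod.fst (F : Set (α × β)) ∧
      Set.InjOn Prod.snd (↑(S \ F) : Set (α × β)) := by
  induction S using Finset.strongInduction with
  | H S ih =>
  obtain rfl | hne := S.eq_empty_or_nonempty
  · exact ⟨∅, by simp⟩
  obtain ⟨p, hp, hp_fst | hp_snd⟩ := exists_unique_fst_or_unique_snd (hS S subset_rfl hne)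
  all_goals
    obtain ⟨F, hFS, hF, hB⟩ := ih (S.erase p) (erase_ssubset hp)
      fun T hT => hS T (hT.trans (erase_subset p S))
    have hpF : p ∉ F := fun h => (mem_erase.1 (hFS h)).1 rfl
  · refine ⟨insert p F, insert_subset hp (hFS.trans (erase_subset p S)), ?_, ?_⟩
    · rw [coe_insert, Set.injOn_insert hpF]
      refine ⟨hF, fun ⟨q, hq, hqp⟩ => ?_⟩
      exact (mem_erase.1 (hFS hq)).1 (hp_fst q (mem_of_mem_erase (hFS hq)) hqp)
    · rwa [sdiff_insert, ← erase_sdiff_comm]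
  · refine ⟨F, hFS.trans (erase_subset p S), hF, ?_⟩
    rw [← insert_erase (mem_sdiff.2 ⟨hp, hpF⟩), ← erase_sdiff_comm, coe_insert,
      Set.injOn_insert fun h => (mem_erase.1 (mem_sdiff.1 h).1).1 rfl]
    refine ⟨hB, fun ⟨q, hq, hqp⟩ => ?_⟩
    have hq' := mem_sdiff.1 hq
    exact (mem_erase.1 hq'.1).1 (hp_snd q (mem_of_mem_erase hq'.1) hqp)

end Forest

section Deterministic

variable {X : Type*} [Fintype X] [DecidableEq X]

theorem exists_eq_pushF (ρ : X → X → ℝ) (hρ : ∀ x y y', ρ x y ≠ 0 → ρ x y' ≠ 0 → y = y') :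
    ∃ h : X → X, ρ = pushF h fun x => ∑ y, ρ x y := by
  have hrow : ∀ x, ∃ y, ∀ y' ≠ y, ρ x y' = 0 := by
    intro x
    by_cases hx : ∀ y, ρ x y = 0
    · exact ⟨x, fun y _ => hx y⟩
    · obtain ⟨y, hy⟩ := not_forall.1 hx
      exact ⟨y, fun y' hy' => by_contra fun h => hy' (hρ x y' y h hy)⟩
  choose h hh using hrow
  refine ⟨h, funext fun x => funext fun y => ?_⟩
  rw [pushF, sum_eq_single (h x) (fun y' _ => hh x y') (by simp)]
  split_ifs with hxy
  · rw [hxy]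
  · exact hh x y (Ne.symm hxy)

theorem exists_eq_pushB (ρ : X → X → ℝ) (hρ : ∀ x x' y, ρ x y ≠ 0 → ρ x' y ≠ 0 → x = x') :
    ∃ h : X → X, ρ = pushB h fun y => ∑ x, ρ x y := by
  obtain ⟨h, hh⟩ := exists_eq_pushF (fun y x => ρ x y) fun y x x' => hρ x x' y
  exact ⟨h, funext fun x => funext fun y => congrFun (congrFun hh y) x⟩

end Deterministic

theorem trim_plan_diffusive_model_general {X : Type*} [Fintype X] [DecidableEq X]
    (μ ν : X → ℝ) (c : X → X → ℝ) (π : X → X → ℝ)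
    (htrim : IsTrim c μ ν π) :
    ∃ (μd μc νd νc : X → ℝ) (h₁ h₂ : X → X),
      (∀ x, 0 ≤ μd x) ∧ (∀ x, 0 ≤ μc x) ∧ (∀ y, 0 ≤ νd y) ∧ (∀ y, 0 ≤ νc y) ∧
      (∀ x, μ x = μd x + μc x) ∧ (∀ y, ν y = νd y + νc y) ∧
      (∀ x y, π x y = pushF h₁ μd x y + pushB h₂ νd x y) := by
  obtain ⟨F, -, hF, hB⟩ := exists_subset_injOn_fst_injOn_snd_sdiff fun T hT hne =>
    htrim.card_lt_card_image_fst_add_card_image_snd hT hne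
  obtain ⟨hπ, hμ, hν⟩ := htrim.1.1
  let πF x y := if (x, y) ∈ F then π x y else 0
  let πB x y := if (x, y) ∈ F then 0 else π x y
  have hsplit : ∀ x y, π x y = πF x y + πB x y := by
    intro x y; simp only [πF, πB]; split_ifs <;> simp
  have hπF : ∀ x y, 0 ≤ πF x y := fun x y => by simp only [πF]; split_ifs <;> simp [hπ]
  have hπB : ∀ x y, 0 ≤ πB x y := fun x y => by simp only [πB]; split_ifs <;> simp [hπ]
  obtain ⟨h₁, hh₁⟩ := exists_eq_pushF πF fun x y y' h h' => by
    simp only [πF, ne_eq, ite_eq_right_iff, not_forall] at h h'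
    exact congrArg Prod.snd (hF h.1 h'.1 rfl)
  obtain ⟨h₂, hh₂⟩ := exists_eq_pushB πB fun x x' y h h' => by
    simp only [πB, ne_eq, ite_eq_left_iff, not_forall] at h h'
    have hmem : ∀ x, (x, y) ∉ F → π x y ≠ 0 → (x, y) ∈ spt π \ F :=
      fun x hxF hπx => mem_sdiff.2 ⟨by simpa [spt] using hπx, hxF⟩
    exact congrArg Prod.fst (hB (hmem x h.1 h.2) (hmem x' h'.1 h'.2) rfl)
  refine ⟨fun x => ∑ y, πF x y, fun x => ∑ y, πB x y, fun y => ∑ x, πB x y,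
    fun y => ∑ x, πF x y, h₁, h₂, fun x => sum_nonneg fun y _ => hπF x y,
    fun x => sum_nonneg fun y _ => hπB x y, fun y => sum_nonneg fun x _ => hπB x y,
    fun y => sum_nonneg fun x _ => hπF x y, fun x => ?_, fun y => ?_, fun x y => ?_⟩
  · rw [← hμ x, ← sum_add_distrib]; exact sum_congr rfl fun y _ => hsplit x y
  · rw [← hν y, add_comm, ← sum_add_distrib]; exact sum_congr rfl fun x _ => hsplit x y
  · rw [← hh₁, ← hh₂]; exact hsplit x y

/-- structure theorem — every trim plan is the sum of two deterministic
plans given by a diffusive model. -/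
theorem trim_plan_diffusive_model {X : Type*} [Fintype X] [DecidableEq X]
    (μ ν : X → ℝ) (c : X → X → ℝ) (π : X → X → ℝ)
    (hμpos : ∀ x, 0 < μ x) (hνpos : ∀ y, 0 < ν y)
    (hmass : ∑ x, μ x = ∑ y, ν y)
    (htrim : IsTrim c μ ν π) :
    ∃ (μd μc νd νc : X → ℝ) (h₁ h₂ : X → X),
      (∀ x, 0 ≤ μd x) ∧ (∀ x, 0 ≤ μc x) ∧ (∀ y, 0 ≤ νd y) ∧ (∀ y, 0 ≤ νc y) ∧
      (∀ x, μ x = μd x + μc x) ∧ (∀ y, ν y = νd y + νc y) ∧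
      (∀ x y, π x y = pushF h₁ μd x y + pushB h₂ νd x y) :=
  trim_plan_diffusive_model_general μ ν c π htrim
end

section
/- Let π be a trim plan between discrete measures μ, ν on a finite set X with cost c, admitting a diffusive model π = (Id,h⁽¹⁾)_#μ⁽ᵈ⁾ + (h⁽²⁾,Id)_#ν⁽ᵈ⁾. Then the optimal transport cost satisfies W_c(μ,ν) = ∑_x c(x, h⁽¹⁾(x)) μ⁽ᵈ⁾_x + ∑_y c(h⁽²⁾(y), y) ν⁽ᵈ⁾_y. -/
open Finset

theorem IsOptimal.Wc_eq_tcost {X : Type*} [Fintype X] {c : X → X → ℝ} {μ ν : X → ℝ}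
    {π : X → X → ℝ} (hπ : IsOptimal c μ ν π) : Wc c μ ν = tcost c π :=
  IsLeast.csInf_eq ⟨⟨π, hπ.1, rfl⟩, fun _ ⟨π', hπ', hr⟩ => hr ▸ hπ.2 π' hπ'⟩

theorem tcost_add_s8 {X : Type*} [Fintype X] (c π₁ π₂ : X → X → ℝ) :
    tcost c (π₁ + π₂) = tcost c π₁ + tcost c π₂ := by
  simp only [tcost, Pi.add_apply, mul_add, sum_add_distrib]

theorem tcost_pushF {X : Type*} [Fintype X] [DecidableEq X] (c : X → X → ℝ) (h : X → X)
    (σ : X → ℝ) : tcost c (pushF h σ) = ∑ x, c x (h x) * σ x := by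
  simp [tcost, pushF, mul_ite]

theorem tcost_pushB {X : Type*} [Fintype X] [DecidableEq X] (c : X → X → ℝ) (h : X → X)
    (σ : X → ℝ) : tcost c (pushB h σ) = ∑ y, c (h y) y * σ y := by
  rw [tcost, sum_comm]
  simp [pushB, mul_ite]

theorem Wc_eq_diffusive_sum_general {X : Type*} [Fintype X] [DecidableEq X]
    (μ ν : X → ℝ) (c : X → X → ℝ) (π : X → X → ℝ)
    (htrim : IsTrim c μ ν π)
    (μd νd : X → ℝ) (h₁ h₂ : X → X)
    (hdec : ∀ x y, π x y = pushF h₁ μd x y + pushB h₂ νd x y) :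
    Wc c μ ν = ∑ x, c x (h₁ x) * μd x + ∑ y, c (h₂ y) y * νd y := by
  have hπ : π = pushF h₁ μd + pushB h₂ νd := funext₂ hdec
  rw [htrim.1.Wc_eq_tcost, hπ, tcost_add_s8, tcost_pushF, tcost_pushB]

/-- for a trim plan with a diffusive model, the optimal transport cost
decomposes along the two diffusive schemes. -/
theorem Wc_eq_diffusive_sum {X : Type*} [Fintype X] [DecidableEq X]
    (μ ν : X → ℝ) (c : X → X → ℝ) (π : X → X → ℝ)
    (hμ0 : ∀ x, 0 ≤ μ x) (hν0 : ∀ y, 0 ≤ ν y)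
    (hμ1 : ∑ x, μ x = 1) (hν1 : ∑ y, ν y = 1)
    (hc : ∀ x y, 0 ≤ c x y)
    (htrim : IsTrim c μ ν π)
    (μd μc νd νc : X → ℝ) (h₁ h₂ : X → X)
    (hμd0 : ∀ x, 0 ≤ μd x) (hμc0 : ∀ x, 0 ≤ μc x)
    (hνd0 : ∀ y, 0 ≤ νd y) (hνc0 : ∀ y, 0 ≤ νc y)
    (hμdec : ∀ x, μ x = μd x + μc x) (hνdec : ∀ y, ν y = νd y + νc y)
    (hdec : ∀ x y, π x y = pushF h₁ μd x y + pushB h₂ νd x y) :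
    Wc c μ ν = ∑ x, c x (h₁ x) * μd x + ∑ y, c (h₂ y) y * νd y :=
  Wc_eq_diffusive_sum_general μ ν c π htrim μd νd h₁ h₂ hdec
end

section
/- Let μ, ν be discrete probability measures on a finite set X, c : X × X → ℝ≥0, and π a trim optimal plan with a diffusive model. Setting α = min over atoms of the diffusive parts of {μ⁽ᵈ⁾_a, ν⁽ᵈ⁾_b}, one has W_c(μ,ν) ≥ α · W_c^{(∞)}(μ,ν), where W_c^{(∞)}(μ,ν) = inf_{π ∈ Π(μ,ν)} ‖c‖_{L^∞_π}. -/
open Finset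

/-!
Since `π` is optimal, `W_c(μ,ν) = ∑ c π`. Every pair `(x, y)` charged by `π` carries a whole atom
`μ⁽ᵈ⁾_x` (when `h⁽¹⁾ x = y`) or `ν⁽ᵈ⁾_y` (when `h⁽²⁾ y = x`), so `π(x,y) ≥ α`. Taking the pair of
the support where `c` is largest, `W_c(μ,ν) ≥ c(x,y) π(x,y) ≥ α ‖c‖_{L^∞_π} ≥ α W_c^{(∞)}(μ,ν)`.
-/

theorem Finset.le_untopD_min {α : Type*} [LinearOrder α] {s : Finset α} {d : α}
    (hs : ∀ a ∈ s, d ≤ a) : d ≤ s.min.untopD d :=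
  (WithTop.le_untopD_iff fun _ => le_rfl).2 <|
    Finset.le_min fun a ha => WithTop.coe_le_coe.2 (hs a ha)

theorem atom_le_pushF_add_pushB {X : Type*} [DecidableEq X] {h₁ h₂ : X → X} {σ τ : X → ℝ}
    (hσ : ∀ x, 0 ≤ σ x) (hτ : ∀ y, 0 ≤ τ y) {x y : X}
    (hne : pushF h₁ σ x y + pushB h₂ τ x y ≠ 0) :
    (σ x ≠ 0 ∧ σ x ≤ pushF h₁ σ x y + pushB h₂ τ x y) ∨
      (τ y ≠ 0 ∧ τ y ≤ pushF h₁ σ x y + pushB h₂ τ x y) := by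
  have := hσ x
  have := hτ y
  unfold pushF pushB at *
  split_ifs at hne ⊢ <;> by_cases σ x = 0 <;> simp_all

section Transport

variable {X : Type*} [Fintype X] {c π : X → X → ℝ} {μ ν : X → ℝ}

theorem Wc_eq_tcost_of_isOptimal (h : IsOptimal c μ ν π) : Wc c μ ν = tcost c π :=
  IsLeast.csInf_eq ⟨⟨π, h.1, rfl⟩, by rintro _ ⟨π', hπ', rfl⟩; exact h.2 π' hπ'⟩

theorem tcost_nonneg (hc : ∀ x y, 0 ≤ c x y) (hπ : ∀ x y, 0 ≤ π x y) : 0 ≤ tcost c π :=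
  sum_nonneg fun x _ => sum_nonneg fun y _ => mul_nonneg (hc x y) (hπ x y)

theorem mul_le_tcost (hc : ∀ x y, 0 ≤ c x y) (hπ : ∀ x y, 0 ≤ π x y) (x y : X) :
    c x y * π x y ≤ tcost c π :=
  calc c x y * π x y ≤ ∑ y', c x y' * π x y' :=
        single_le_sum (fun y' _ => mul_nonneg (hc x y') (hπ x y')) (mem_univ y)
    _ ≤ tcost c π :=
        single_le_sum (f := fun x => ∑ y, c x y * π x y)
          (fun x' _ => sum_nonneg fun y' _ => mul_nonneg (hc x' y') (hπ x' y')) (mem_univ x)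

theorem linf_eq_zero_or_exists_mem_spt (c π : X → X → ℝ) :
    linf c π = 0 ∨ ∃ p ∈ spt π, linf c π = c p.1 p.2 := by
  rcases h : ((spt π).image fun p => c p.1 p.2).max with _ | m
  · exact Or.inl (by rw [linf, h]; rfl)
  · obtain ⟨p, hp, rfl⟩ := mem_image.mp (mem_of_max h)
    exact Or.inr ⟨p, hp, by rw [linf, h]; rfl⟩

theorem linf_nonneg (hc : ∀ x y, 0 ≤ c x y) (π : X → X → ℝ) : 0 ≤ linf c π := by
  rcases linf_eq_zero_or_exists_mem_spt c π with h | ⟨p, -, h⟩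
  · exact h.ge
  · exact h ▸ hc p.1 p.2

theorem Winf_le_linf (hc : ∀ x y, 0 ≤ c x y) (hπ : IsPlan μ ν π) : Winf c μ ν ≤ linf c π :=
  csInf_le ⟨0, by rintro _ ⟨π', -, rfl⟩; exact linf_nonneg hc π'⟩ ⟨π, hπ, rfl⟩

theorem mul_linf_le_tcost {α : ℝ} (hc : ∀ x y, 0 ≤ c x y) (hπ : ∀ x y, 0 ≤ π x y)
    (hle : ∀ p ∈ spt π, α ≤ π p.1 p.2) : α * linf c π ≤ tcost c π := by
  rcases linf_eq_zero_or_exists_mem_spt c π with h | ⟨p, hp, h⟩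
  · rw [h, mul_zero]
    exact tcost_nonneg hc hπ
  · rw [h, mul_comm]
    exact (mul_le_mul_of_nonneg_left (hle p hp) (hc _ _)).trans (mul_le_tcost hc hπ _ _)

/-- The paper's `α`; it is `0` when `σ = τ = 0`. -/
noncomputable def minAtomMass (σ τ : X → ℝ) : ℝ :=
  WithTop.untopD 0 ((((msupp σ).image σ) ∪ ((msupp τ).image τ)).min)

theorem minAtomMass_nonneg {σ τ : X → ℝ} (hσ : ∀ x, 0 ≤ σ x) (hτ : ∀ y, 0 ≤ τ y) :
    0 ≤ minAtomMass σ τ :=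
  Finset.le_untopD_min <| by
    simp only [mem_union, mem_image]
    rintro a (⟨x, -, rfl⟩ | ⟨y, -, rfl⟩)
    exacts [hσ x, hτ y]

theorem minAtomMass_le_left {σ : X → ℝ} (τ : X → ℝ) {x : X} (hx : σ x ≠ 0) :
    minAtomMass σ τ ≤ σ x :=
  WithTop.untopD_le <| min_le <| mem_union_left _ <| mem_image_of_mem σ (by simp [msupp, hx])

theorem minAtomMass_le_right (σ : X → ℝ) {τ : X → ℝ} {y : X} (hy : τ y ≠ 0) :
    minAtomMass σ τ ≤ τ y :=
  WithTop.untopD_le <| min_le <| mem_union_right _ <| mem_image_of_mem τ (by simp [msupp, hy])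

variable [DecidableEq X]

theorem minAtomMass_le_of_mem_spt {h₁ h₂ : X → X} {σ τ : X → ℝ} (hσ : ∀ x, 0 ≤ σ x)
    (hτ : ∀ y, 0 ≤ τ y) (hdec : ∀ x y, π x y = pushF h₁ σ x y + pushB h₂ τ x y)
    {p : X × X} (hp : p ∈ spt π) : minAtomMass σ τ ≤ π p.1 p.2 := by
  have hne : π p.1 p.2 ≠ 0 := by simpa [spt] using hp
  rw [hdec] at hne ⊢
  rcases atom_le_pushF_add_pushB hσ hτ hne with ⟨hx, hle⟩ | ⟨hy, hle⟩
  · exact (minAtomMass_le_left τ hx).trans hle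
  · exact (minAtomMass_le_right σ hy).trans hle

end Transport

theorem Wc_ge_alpha_mul_Winf_general {X : Type*} [Fintype X] [DecidableEq X]
    (μ ν : X → ℝ) (c : X → X → ℝ) (π : X → X → ℝ)
    (hc : ∀ x y, 0 ≤ c x y)
    (htrim : IsTrim c μ ν π)
    (μd νd : X → ℝ) (h₁ h₂ : X → X)
    (hμd0 : ∀ x, 0 ≤ μd x)
    (hνd0 : ∀ y, 0 ≤ νd y)
    (hdec : ∀ x y, π x y = pushF h₁ μd x y + pushB h₂ νd x y) :
    Wc c μ ν ≥
      WithTop.untopD 0 ((((msupp μd).image μd) ∪ ((msupp νd).image νd)).min) * Winf c μ ν := by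
  have hopt := htrim.1
  have hα := minAtomMass_nonneg hμd0 hνd0
  rw [ge_iff_le, Wc_eq_tcost_of_isOptimal hopt]
  calc minAtomMass μd νd * Winf c μ ν ≤ minAtomMass μd νd * linf c π :=
        mul_le_mul_of_nonneg_left (Winf_le_linf hc hopt.1) hα
    _ ≤ tcost c π :=
        mul_linf_le_tcost hc hopt.1.1 fun _ hp => minAtomMass_le_of_mem_spt hμd0 hνd0 hdec hp

/-- `W_c(μ,ν) ≥ α · W_c^{(∞)}(μ,ν)` where `α` is the minimal atom mass of
the diffusive parts of a diffusive model of a trim plan. -/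
theorem Wc_ge_alpha_mul_Winf {X : Type*} [Fintype X] [DecidableEq X]
    (μ ν : X → ℝ) (c : X → X → ℝ) (π : X → X → ℝ)
    (hμ0 : ∀ x, 0 ≤ μ x) (hν0 : ∀ y, 0 ≤ ν y)
    (hμ1 : ∑ x, μ x = 1) (hν1 : ∑ y, ν y = 1)
    (hc : ∀ x y, 0 ≤ c x y)
    (htrim : IsTrim c μ ν π)
    (μd μc νd νc : X → ℝ) (h₁ h₂ : X → X)
    (hμd0 : ∀ x, 0 ≤ μd x) (hμc0 : ∀ x, 0 ≤ μc x)
    (hνd0 : ∀ y, 0 ≤ νd y) (hνc0 : ∀ y, 0 ≤ νc y)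
    (hμdec : ∀ x, μ x = μd x + μc x) (hνdec : ∀ y, ν y = νd y + νc y)
    (hdec : ∀ x y, π x y = pushF h₁ μd x y + pushB h₂ νd x y) :
    Wc c μ ν ≥
      WithTop.untopD 0 ((((msupp μd).image μd) ∪ ((msupp νd).image νd)).min) * Winf c μ ν :=
  Wc_ge_alpha_mul_Winf_general μ ν c π hc htrim μd νd h₁ h₂ hμd0 hνd0 hdec
end

section
/- For any trim plan π between discrete measures μ, ν on a finite set X, there exists a diffusive model such that every atom of μ⁽ᵈ⁾ and ν⁽ᵈ⁾ has mass at least min over pairs of subsets (A,B) ⊆ X × X with |∑_{x∈A} μ_x − ∑_{y∈B} ν_y| > 0 of |∑_{x∈A} μ_x − ∑_{y∈B} ν_y|. In particular, the constant α of the diffusive model is bounded below by a quantity depending only on μ and ν (not on the cost). -/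
open Finset

/-!
A trim plan supports no nonzero circulation (a matrix with vanishing row and column sums):
optimality forces such a circulation to cost nothing, and moving along it until an entry
vanishes would give an optimal plan with smaller support. A dimension count shows that a
support carrying no circulation has a row or a column with a single entry `(x₀, y₀)`. All of
`μ x₀` then sits on `(x₀, y₀)`; make it a diffusive atom, delete the row, and recurse. By
induction every atom is a discrepancy `|μ(A) - ν(B)|` of the reduced marginals, and moving `x₀`
in or out of `A` turns it into a discrepancy of `μ` and `ν`. So every nonzero atom is a
positive discrepancy, hence at least the least one.
-/

open Function

section Circulation
variable {α β : Type*} [Fintype α] [Fintype β] {π δ : α → β → ℝ}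

def IsCirculation (δ : α → β → ℝ) : Prop :=
  (∀ a, ∑ b, δ a b = 0) ∧ ∀ b, ∑ a, δ a b = 0

def SupportsNoCirculation (π : α → β → ℝ) : Prop :=
  ∀ δ : α → β → ℝ, IsCirculation δ → (∀ a b, π a b = 0 → δ a b = 0) → δ = 0

lemma isCirculation_of_forall_ne (a₀ : α) (hrow : ∀ a ≠ a₀, ∑ b, δ a b = 0)
    (hcol : ∀ b, ∑ a, δ a b = 0) : IsCirculation δ := by
  have hrow₀ : ∑ b, δ a₀ b = 0 := calc
    ∑ b, δ a₀ b = ∑ a, ∑ b, δ a b := (Fintype.sum_eq_single _ hrow).symm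
    _ = ∑ b, ∑ a, δ a b := sum_comm
    _ = 0 := sum_eq_zero fun b _ => hcol b
  refine ⟨fun a => ?_, hcol⟩
  by_cases ha : a = a₀
  · exact ha ▸ hrow₀
  · exact hrow a ha

lemma IsCirculation.neg (hδ : IsCirculation δ) : IsCirculation (-δ) := by
  simp only [IsCirculation, Pi.neg_apply, sum_neg_distrib, neg_eq_zero]
  exact hδ

lemma IsCirculation.exists_neg (hδ : IsCirculation δ) (h0 : δ ≠ 0) : ∃ a b, δ a b < 0 := by
  by_contra! hnn
  exact h0 <| funext fun a => funext fun b =>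
    (sum_eq_zero_iff_of_nonneg fun b _ => hnn a b).mp (hδ.1 a) b (mem_univ b)

lemma SupportsNoCirculation.mono {π' : α → β → ℝ} (hπ : SupportsNoCirculation π)
    (hsupp : ∀ a b, π a b = 0 → π' a b = 0) : SupportsNoCirculation π' :=
  fun δ hδ hδsupp => hπ δ hδ fun a b h => hδsupp a b (hsupp a b h)

lemma SupportsNoCirculation.swap (hπ : SupportsNoCirculation π) :
    SupportsNoCirculation (Function.swap π) := by
  intro δ hδ hsupp
  have := hπ (Function.swap δ) ⟨hδ.2, hδ.1⟩ fun a b h => hsupp b a h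
  funext b a
  exact congr_fun (congr_fun this a) b

lemma two_mul_card_image_le_card {γ κ : Type*} [DecidableEq κ] {S : Finset γ} {f : γ → κ}
    (h : ∀ p ∈ S, ∃ q ∈ S, q ≠ p ∧ f q = f p) : 2 * #(S.image f) ≤ #S := by
  refine mul_card_image_le_card S 2 fun k hk => ?_
  obtain ⟨p, hp, rfl⟩ := mem_image.mp hk
  obtain ⟨q, hq, hqp, hfq⟩ := h p hp
  exact one_lt_card.mpr ⟨q, mem_filter.mpr ⟨hq, hfq⟩, p, mem_filter.mpr ⟨hp, rfl⟩, hqp⟩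

theorem exists_circulation_of_forall_exists_ne [DecidableEq α] [DecidableEq β]
    {S : Finset (α × β)} (hS : S.Nonempty)
    (hrow : ∀ p ∈ S, ∃ q ∈ S, q ≠ p ∧ q.1 = p.1)
    (hcol : ∀ p ∈ S, ∃ q ∈ S, q ≠ p ∧ q.2 = p.2) :
    ∃ δ : α → β → ℝ, δ ≠ 0 ∧ IsCirculation δ ∧ ∀ a b, (a, b) ∉ S → δ a b = 0 := by
  obtain ⟨p₀, hp₀⟩ := hS
  set R := S.image Prod.fst
  set C := S.image Prod.snd
  have hR : p₀.1 ∈ R := mem_image_of_mem _ hp₀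
  -- The row `p₀.1` is left out: its sum is forced by the others (`isCirculation_of_forall_ne`).
  let T : (α × β → ℝ) →ₗ[ℝ] ((↥Sᶜ → ℝ) × (↥(R.erase p₀.1) → ℝ)) × (↥C → ℝ) :=
    ((LinearMap.pi fun p => LinearMap.proj p.1).prod
      (LinearMap.pi fun a => ∑ b, LinearMap.proj (a.1, b))).prod
      (LinearMap.pi fun b => ∑ a, LinearMap.proj (a, b.1))
  -- Every row and column of `S` has two entries, so `#R + #C ≤ #S`.
  have hdim : Module.finrank ℝ (((↥Sᶜ → ℝ) × (↥(R.erase p₀.1) → ℝ)) × (↥C → ℝ)) <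
      Module.finrank ℝ (α × β → ℝ) := by
    have h₁ : 2 * #R ≤ #S := two_mul_card_image_le_card hrow
    have h₂ : 2 * #C ≤ #S := two_mul_card_image_le_card hcol
    have h₃ : #S ≤ Fintype.card (α × β) := card_le_univ S
    have h₄ : 0 < #R := card_pos.mpr ⟨_, hR⟩
    simp only [Module.finrank_prod, Module.finrank_fintype_fun_eq_card, Fintype.card_coe,
      card_compl, card_erase_of_mem hR]
    omega
  obtain ⟨f, hf, hf0⟩ :=
    (Submodule.ne_bot_iff _).mp (LinearMap.ker_ne_bot_of_finrank_lt (f := T) hdim)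
  simp only [LinearMap.ker_prod, Submodule.mem_inf, LinearMap.mem_ker, funext_iff,
    LinearMap.pi_apply, LinearMap.coe_proj, eval, Pi.zero_apply, Subtype.forall, mem_compl,
    Prod.forall, LinearMap.coe_sum, Finset.sum_apply, mem_erase, T] at hf
  obtain ⟨⟨hoff, hrows⟩, hcols⟩ := hf
  refine ⟨curry f, fun h => hf0 (funext fun p => congr_fun (congr_fun h p.1) p.2),
    isCirculation_of_forall_ne p₀.1 (fun a ha => ?_) (fun b => ?_), hoff⟩
  · by_cases haR : a ∈ R
    · exact hrows a ⟨ha, haR⟩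
    · exact sum_eq_zero fun b _ => hoff a b fun h => haR (mem_image_of_mem _ h)
  · by_cases hbC : b ∈ C
    · exact hcols b hbC
    · exact sum_eq_zero fun a _ => hoff a b fun h => hbC (mem_image_of_mem _ h)

def IsRowLeaf (π : α → β → ℝ) (a : α) (b : β) : Prop :=
  π a b ≠ 0 ∧ ∀ b', π a b' ≠ 0 → b' = b

theorem SupportsNoCirculation.exists_rowLeaf (hπ : SupportsNoCirculation π)
    (hne : ∃ a b, π a b ≠ 0) :
    (∃ a b, IsRowLeaf π a b) ∨ ∃ b a, IsRowLeaf (Function.swap π) b a := by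
  classical
  by_contra! h
  set S : Finset (α × β) := {p | π p.1 p.2 ≠ 0}
  have hrow : ∀ p ∈ S, ∃ q ∈ S, q ≠ p ∧ q.1 = p.1 := by
    intro p hp
    obtain ⟨b, hb, hne⟩ : ∃ b, π p.1 b ≠ 0 ∧ b ≠ p.2 := by
      simpa [IsRowLeaf, (mem_filter.mp hp).2] using h.1 p.1 p.2
    exact ⟨(p.1, b), by simpa [S] using hb, fun h => hne (congr_arg Prod.snd h), rfl⟩
  have hcol : ∀ p ∈ S, ∃ q ∈ S, q ≠ p ∧ q.2 = p.2 := by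
    intro p hp
    obtain ⟨a, ha, hne⟩ : ∃ a, π a p.2 ≠ 0 ∧ a ≠ p.1 := by
      simpa [IsRowLeaf, (mem_filter.mp hp).2] using h.2 p.2 p.1
    exact ⟨(a, p.2), by simpa [S] using ha, fun h => hne (congr_arg Prod.fst h), rfl⟩
  obtain ⟨a₀, b₀, h₀⟩ := hne
  obtain ⟨δ, hδ0, hδ, hsupp⟩ :=
    exists_circulation_of_forall_exists_ne ⟨(a₀, b₀), by simpa [S] using h₀⟩ hrow hcol
  exact hδ0 (hπ δ hδ fun a b hab => hsupp a b (by simpa [S] using hab))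

lemma exists_pos_add_mul_nonneg_and_eq_zero (hπ : ∀ a b, 0 ≤ π a b)
    (hsupp : ∀ a b, π a b = 0 → δ a b = 0) (hneg : ∃ a b, δ a b < 0) :
    ∃ t > 0, (∀ a b, 0 ≤ π a b + t * δ a b) ∧ ∃ a b, π a b ≠ 0 ∧ π a b + t * δ a b = 0 := by
  obtain ⟨a₀, b₀, h₀⟩ := hneg
  obtain ⟨q, hq, hmin⟩ := exists_min_image {p : α × β | δ p.1 p.2 < 0}
    (fun p => π p.1 p.2 / -δ p.1 p.2) ⟨(a₀, b₀), by simpa using h₀⟩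
  rw [mem_filter] at hq
  have hπq : π q.1 q.2 ≠ 0 := fun h => hq.2.ne (hsupp _ _ h)
  refine ⟨_, div_pos ((hπ _ _).lt_of_ne' hπq) (neg_pos.mpr hq.2), fun a b => ?_,
    q.1, q.2, hπq, by field_simp [hq.2.ne]; ring⟩
  rcases lt_or_ge (δ a b) 0 with hab | hab
  · have := hmin (a, b) (by simpa using hab)
    rw [le_div_iff₀ (neg_pos.mpr hab)] at this
    linarith
  · exact add_nonneg (hπ a b) (mul_nonneg (div_nonneg (hπ _ _) (neg_nonneg.mpr hq.2.le)) hab)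

end Circulation

lemma IsRowLeaf.row_eq {α β : Type*} [DecidableEq β] {π : α → β → ℝ} {a : α} {b : β}
    (h : IsRowLeaf π a b) : π a = Pi.single b (π a b) := by
  funext b'
  by_cases hb : b' = b
  · simp [hb]
  · simpa [hb] using not_imp_comm.mp (h.2 b') hb

section Plan
variable {X : Type*} [Fintype X] {μ ν : X → ℝ} {c π δ : X → X → ℝ}

lemma mem_spt {p : X × X} : p ∈ spt π ↔ π p.1 p.2 ≠ 0 := by
  classical
  simp [spt]

lemma card_spt_lt_card_spt {π' : X → X → ℝ} (hsupp : ∀ x y, π x y = 0 → π' x y = 0)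
    {x₀ y₀ : X} (h₀ : π x₀ y₀ ≠ 0) (h₀' : π' x₀ y₀ = 0) : #(spt π') < #(spt π) := by
  refine card_lt_card ((ssubset_iff_of_subset fun p hp => ?_).mpr ⟨(x₀, y₀), ?_, ?_⟩)
  · exact mem_spt.mpr fun h => mem_spt.mp hp (hsupp _ _ h)
  · exact mem_spt.mpr h₀
  · exact fun h => mem_spt.mp h h₀'

lemma card_spt_swap (π : X → X → ℝ) : #(spt (Function.swap π)) = #(spt π) :=
  card_nbij' Prod.swap Prod.swap (fun _ hp => by simpa [mem_spt] using hp)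
    (fun _ hp => by simpa [mem_spt] using hp) (fun p _ => p.swap_swap) (fun p _ => p.swap_swap)

lemma tcost_add_mul (c π δ : X → X → ℝ) (t : ℝ) :
    tcost c (fun x y => π x y + t * δ x y) = tcost c π + t * tcost c δ := by
  simp only [tcost, mul_add, sum_add_distrib, mul_sum, mul_left_comm t]

lemma tcost_neg (c δ : X → X → ℝ) : tcost c (-δ) = -tcost c δ := by
  simp [tcost]

lemma IsPlan.swap (hπ : IsPlan μ ν π) : IsPlan ν μ (Function.swap π) :=
  ⟨fun x y => hπ.1 y x, hπ.2.2, hπ.2.1⟩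

lemma IsPlan.add_mul_circulation (hπ : IsPlan μ ν π) (hδ : IsCirculation δ) {t : ℝ}
    (hnn : ∀ x y, 0 ≤ π x y + t * δ x y) : IsPlan μ ν (fun x y => π x y + t * δ x y) := by
  refine ⟨hnn, fun x => ?_, fun y => ?_⟩
  · rw [sum_add_distrib, ← mul_sum, hδ.1 x, hπ.2.1 x, mul_zero, add_zero]
  · rw [sum_add_distrib, ← mul_sum, hδ.2 y, hπ.2.2 y, mul_zero, add_zero]

lemma IsOptimal.tcost_nonneg_of_circulation (hπ : IsOptimal c μ ν π) (hδ : IsCirculation δ)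
    (hsupp : ∀ x y, π x y = 0 → δ x y = 0) (hneg : ∃ x y, δ x y < 0) : 0 ≤ tcost c δ := by
  obtain ⟨t, ht, hnn, -⟩ := exists_pos_add_mul_nonneg_and_eq_zero hπ.1.1 hsupp hneg
  have := hπ.2 _ (hπ.1.add_mul_circulation hδ hnn)
  rw [tcost_add_mul] at this
  exact nonneg_of_mul_nonneg_right (by linarith) ht

lemma IsOptimal.tcost_eq_zero_of_circulation (hπ : IsOptimal c μ ν π) (hδ : IsCirculation δ)
    (hsupp : ∀ x y, π x y = 0 → δ x y = 0) (h0 : δ ≠ 0) : tcost c δ = 0 := by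
  have h₁ := hπ.tcost_nonneg_of_circulation hδ hsupp (hδ.exists_neg h0)
  have h₂ := hπ.tcost_nonneg_of_circulation hδ.neg (fun x y h => by simp [hsupp x y h])
    (hδ.neg.exists_neg (neg_ne_zero.mpr h0))
  rw [tcost_neg] at h₂
  linarith

theorem IsTrim.supportsNoCirculation (hπ : IsTrim c μ ν π) : SupportsNoCirculation π := by
  intro δ hδ hsupp
  by_contra h0
  obtain ⟨t, -, hnn, x₀, y₀, h₀, h₀'⟩ :=
    exists_pos_add_mul_nonneg_and_eq_zero hπ.1.1.1 hsupp (hδ.exists_neg h0)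
  have hopt : IsOptimal c μ ν (fun x y => π x y + t * δ x y) := by
    refine ⟨hπ.1.1.add_mul_circulation hδ hnn, fun τ hτ => ?_⟩
    rw [tcost_add_mul, hπ.1.tcost_eq_zero_of_circulation hδ hsupp h0, mul_zero, add_zero]
    exact hπ.1.2 τ hτ
  have hlt := card_spt_lt_card_spt (π' := fun x y => π x y + t * δ x y)
    (fun x y h => by simp [h, hsupp x y h]) h₀ h₀'
  exact (hπ.2 _ hopt).not_gt hlt

end Plan

section Discrepancy
variable {α β : Type*} {μ : α → ℝ} {ν : β → ℝ}

def discrepancies (μ : α → ℝ) (ν : β → ℝ) : Set ℝ :=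
  {r | ∃ (A : Finset α) (B : Finset β), r = |∑ x ∈ A, μ x - ∑ y ∈ B, ν y|}

lemma zero_mem_discrepancies : (0 : ℝ) ∈ discrepancies μ ν :=
  ⟨∅, ∅, by simp⟩

lemma discrepancies_comm : discrepancies ν μ = discrepancies μ ν := by
  ext r
  constructor <;> rintro ⟨A, B, rfl⟩ <;> exact ⟨B, A, abs_sub_comm _ _⟩

lemma discrepancies_sub_single_subset [DecidableEq α] [DecidableEq β] {x₀ : α} {y₀ : β}
    {m : ℝ} (hm : μ x₀ = m) :
    discrepancies (μ - Pi.single x₀ m) (ν - Pi.single y₀ m) ⊆ discrepancies μ ν := by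
  rintro r ⟨A, B, rfl⟩
  by_cases hy₀ : y₀ ∈ B
  · refine ⟨insert x₀ A, B, ?_⟩
    by_cases hx₀ : x₀ ∈ A
    · rw [insert_eq_of_mem hx₀]
      simp [sum_sub_distrib, hx₀, hy₀]
    · rw [sum_insert hx₀, hm]
      simp only [Pi.sub_apply, sum_sub_distrib, sum_pi_single', hx₀, hy₀, if_true, if_false]
      congr 1
      ring
  · refine ⟨A.erase x₀, B, ?_⟩
    by_cases hx₀ : x₀ ∈ A
    · simp [sum_sub_distrib, hx₀, hy₀, sum_erase_eq_sub, hm]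
    · simp [sum_sub_distrib, hx₀, hy₀]

lemma sInf_pos_discrepancies_le {r : ℝ} (hr : r ∈ discrepancies μ ν) (h0 : r ≠ 0) :
    sInf {r | ∃ (A : Finset α) (B : Finset β), r = |∑ x ∈ A, μ x - ∑ y ∈ B, ν y| ∧ 0 < r} ≤ r := by
  obtain ⟨A, B, rfl⟩ := hr
  exact csInf_le ⟨0, fun s ⟨_, _, _, hs⟩ => hs.le⟩ ⟨A, B, rfl, (abs_nonneg _).lt_of_ne' h0⟩

end Discrepancy

section Model
variable {X : Type*} [DecidableEq X] {μ ν : X → ℝ} {π : X → X → ℝ}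

structure DiffusiveModel (μ ν : X → ℝ) (π : X → X → ℝ) where
  μd : X → ℝ
  μc : X → ℝ
  νd : X → ℝ
  νc : X → ℝ
  h₁ : X → X
  h₂ : X → X
  μd_nonneg : ∀ x, 0 ≤ μd x
  μc_nonneg : ∀ x, 0 ≤ μc x
  νd_nonneg : ∀ y, 0 ≤ νd y
  νc_nonneg : ∀ y, 0 ≤ νc y
  μ_eq : ∀ x, μ x = μd x + μc x
  ν_eq : ∀ y, ν y = νd y + νc y
  π_eq : ∀ x y, π x y = pushF h₁ μd x y + pushB h₂ νd x y

lemma pushF_nonneg {h : X → X} {σ : X → ℝ} (hσ : ∀ x, 0 ≤ σ x) (x y : X) :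
    0 ≤ pushF h σ x y := by
  unfold pushF
  split_ifs
  exacts [hσ x, le_rfl]

lemma pushB_nonneg {h : X → X} {σ : X → ℝ} (hσ : ∀ x, 0 ≤ σ x) (x y : X) :
    0 ≤ pushB h σ x y :=
  pushF_nonneg hσ y x

lemma DiffusiveModel.μd_eq_zero (M : DiffusiveModel μ ν π) {x : X} (h : μ x = 0) :
    M.μd x = 0 := by
  linarith [M.μ_eq x, M.μd_nonneg x, M.μc_nonneg x]

lemma DiffusiveModel.pushB_eq_zero (M : DiffusiveModel μ ν π) {x y : X} (h : π x y = 0) :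
    pushB M.h₂ M.νd x y = 0 := by
  linarith [M.π_eq x y, pushF_nonneg M.μd_nonneg (h := M.h₁) x y,
    pushB_nonneg M.νd_nonneg (h := M.h₂) x y]

def DiffusiveModel.swap (M : DiffusiveModel ν μ (Function.swap π)) : DiffusiveModel μ ν π where
  μd := M.νd
  μc := M.νc
  νd := M.μd
  νc := M.μc
  h₁ := M.h₂
  h₂ := M.h₁
  μd_nonneg := M.νd_nonneg
  μc_nonneg := M.νc_nonneg
  νd_nonneg := M.μd_nonneg
  νc_nonneg := M.μc_nonneg
  μ_eq := M.ν_eq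
  ν_eq := M.μ_eq
  π_eq x y := by rw [add_comm]; exact M.π_eq y x

def HasDiscrepancyModel (μ ν : X → ℝ) (π : X → X → ℝ) : Prop :=
  ∃ M : DiffusiveModel μ ν π, ∀ x, M.μd x ∈ discrepancies μ ν ∧ M.νd x ∈ discrepancies μ ν

lemma HasDiscrepancyModel.of_swap (h : HasDiscrepancyModel ν μ (Function.swap π)) :
    HasDiscrepancyModel μ ν π := by
  obtain ⟨M, hM⟩ := h
  exact ⟨M.swap, fun x => discrepancies_comm (μ := μ) ▸ (hM x).symm⟩

variable [Fintype X]

lemma hasDiscrepancyModel_of_forall_eq_zero (hπ : IsPlan μ ν π) (h0 : ∀ x y, π x y = 0) :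
    HasDiscrepancyModel μ ν π := by
  refine ⟨⟨0, 0, 0, 0, id, id, fun _ => le_rfl, fun _ => le_rfl, fun _ => le_rfl,
    fun _ => le_rfl, fun x => ?_, fun y => ?_, fun x y => ?_⟩,
    fun _ => ⟨zero_mem_discrepancies, zero_mem_discrepancies⟩⟩
  · simp [← hπ.2.1 x, h0]
  · simp [← hπ.2.2 y, h0]
  · simp [pushF, pushB, h0]

end Model

section RowLeaf
variable {X : Type*} [Fintype X] [DecidableEq X] {μ ν : X → ℝ} {π : X → X → ℝ} {x₀ y₀ : X}

lemma IsPlan.apply_eq_of_isRowLeaf (hπ : IsPlan μ ν π) (hleaf : IsRowLeaf π x₀ y₀) :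
    μ x₀ = π x₀ y₀ := by
  rw [← hπ.2.1 x₀, hleaf.row_eq]
  simp

lemma IsPlan.update_row (hπ : IsPlan μ ν π) (hleaf : IsRowLeaf π x₀ y₀) :
    IsPlan (μ - Pi.single x₀ (π x₀ y₀)) (ν - Pi.single y₀ (π x₀ y₀)) (update π x₀ 0) := by
  refine ⟨fun x y => ?_, fun x => ?_, fun y => ?_⟩
  · by_cases hx : x = x₀
    · simp [hx]
    · simpa [hx] using hπ.1 x y
  · by_cases hx : x = x₀
    · simp [hx, hπ.apply_eq_of_isRowLeaf hleaf]
    · simp [hx, hπ.2.1 x]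
  · have hcol := hπ.2.2 y
    rw [← add_sum_erase _ _ (mem_univ x₀), hleaf.row_eq] at hcol
    rw [← add_sum_erase _ _ (mem_univ x₀), update_self,
      sum_congr rfl fun x hx => by rw [update_of_ne (ne_of_mem_erase hx)]]
    simp only [Pi.zero_apply, Pi.sub_apply]
    linarith

theorem HasDiscrepancyModel.of_update_row (hπ : IsPlan μ ν π) (hleaf : IsRowLeaf π x₀ y₀)
    (h : HasDiscrepancyModel (μ - Pi.single x₀ (π x₀ y₀)) (ν - Pi.single y₀ (π x₀ y₀))
      (update π x₀ 0)) :
    HasDiscrepancyModel μ ν π := by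
  obtain ⟨M, hM⟩ := h
  have hm : μ x₀ = π x₀ y₀ := hπ.apply_eq_of_isRowLeaf hleaf
  have hm0 : 0 ≤ π x₀ y₀ := hπ.1 x₀ y₀
  have hμd₀ : M.μd x₀ = 0 := M.μd_eq_zero (by simp [hm])
  have hpushB₀ : ∀ y, pushB M.h₂ M.νd x₀ y = 0 := fun y => M.pushB_eq_zero (by simp)
  refine ⟨
    { μd := M.μd + Pi.single x₀ (π x₀ y₀)
      μc := M.μc
      νd := M.νd
      νc := M.νc + Pi.single y₀ (π x₀ y₀)
      h₁ := update M.h₁ x₀ y₀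
      h₂ := M.h₂
      μd_nonneg := fun x =>
        add_nonneg (M.μd_nonneg x) (Pi.single_nonneg (α := fun _ ↦ ℝ) |>.mpr hm0 x)
      μc_nonneg := M.μc_nonneg
      νd_nonneg := M.νd_nonneg
      νc_nonneg := fun y =>
        add_nonneg (M.νc_nonneg y) (Pi.single_nonneg (α := fun _ ↦ ℝ) |>.mpr hm0 y)
      μ_eq := fun x => by
        have := M.μ_eq x
        simp only [Pi.add_apply, Pi.sub_apply] at this ⊢
        linarith
      ν_eq := fun y => by
        have := M.ν_eq y
        simp only [Pi.add_apply, Pi.sub_apply] at this ⊢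
        linarith
      π_eq := fun x y => ?_ }, fun x => ⟨?_, discrepancies_sub_single_subset hm (hM x).2⟩⟩
  · by_cases hx : x = x₀
    · rw [hx, congr_fun hleaf.row_eq y, hpushB₀]
      simp [pushF, hμd₀, Pi.single_apply, eq_comm]
    · simpa [pushF, pushB, hx] using M.π_eq x y
  · by_cases hx : x = x₀
    · rw [hx]
      exact ⟨{x₀}, ∅, by simp [hμd₀, hm, abs_of_nonneg hm0]⟩
    · simpa [hx] using discrepancies_sub_single_subset hm (hM x).1

end RowLeaf

theorem hasDiscrepancyModel_of_supportsNoCirculation {X : Type*} [Fintype X] [DecidableEq X]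
    {μ ν : X → ℝ} {π : X → X → ℝ} (hπ : IsPlan μ ν π) (hcirc : SupportsNoCirculation π) :
    HasDiscrepancyModel μ ν π := by
  induction hn : #(spt π) using Nat.strong_induction_on generalizing μ ν π with
  | _ n ih =>
  by_cases h0 : ∀ x y, π x y = 0
  · exact hasDiscrepancyModel_of_forall_eq_zero hπ h0
  have of_rowLeaf : ∀ {μ ν : X → ℝ} {π : X → X → ℝ} {x₀ y₀ : X}, IsPlan μ ν π →
      SupportsNoCirculation π → #(spt π) = n → IsRowLeaf π x₀ y₀ →
      HasDiscrepancyModel μ ν π := by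
    intro μ ν π x₀ y₀ hπ hcirc hn hleaf
    have hsupp : ∀ x y, π x y = 0 → update π x₀ 0 x y = 0 := fun x y h => by
      by_cases hx : x = x₀ <;> simp [hx, h]
    refine .of_update_row hπ hleaf (ih _ ?_ (hπ.update_row hleaf) (hcirc.mono hsupp) rfl)
    exact hn ▸ card_spt_lt_card_spt hsupp hleaf.1 (by simp)
  rcases hcirc.exists_rowLeaf (by simpa using h0) with ⟨x₀, y₀, hleaf⟩ | ⟨y₀, x₀, hleaf⟩
  · exact of_rowLeaf hπ hcirc hn hleaf
  · exact .of_swap (of_rowLeaf hπ.swap hcirc.swap ((card_spt_swap π).trans hn) hleaf)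

theorem exists_diffusive_model_uniform_bound_general {X : Type*} [Fintype X] [DecidableEq X]
    (μ ν : X → ℝ) (c : X → X → ℝ) (π : X → X → ℝ)
    (htrim : IsTrim c μ ν π) :
    ∃ (μd μc νd νc : X → ℝ) (h₁ h₂ : X → X),
      (∀ x, 0 ≤ μd x) ∧ (∀ x, 0 ≤ μc x) ∧ (∀ y, 0 ≤ νd y) ∧ (∀ y, 0 ≤ νc y) ∧
      (∀ x, μ x = μd x + μc x) ∧ (∀ y, ν y = νd y + νc y) ∧
      (∀ x y, π x y = pushF h₁ μd x y + pushB h₂ νd x y) ∧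
      (∀ a, μd a ≠ 0 →
        sInf {r | ∃ A B : Finset X,
          r = |∑ x ∈ A, μ x - ∑ y ∈ B, ν y| ∧ 0 < r} ≤ μd a) ∧
      (∀ b, νd b ≠ 0 →
        sInf {r | ∃ A B : Finset X,
          r = |∑ x ∈ A, μ x - ∑ y ∈ B, ν y| ∧ 0 < r} ≤ νd b) := by
  obtain ⟨M, hM⟩ :=
    hasDiscrepancyModel_of_supportsNoCirculation htrim.1.1 htrim.supportsNoCirculation
  exact ⟨M.μd, M.μc, M.νd, M.νc, M.h₁, M.h₂, M.μd_nonneg, M.μc_nonneg, M.νd_nonneg,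
    M.νc_nonneg, M.μ_eq, M.ν_eq, M.π_eq, fun a ha => sInf_pos_discrepancies_le (hM a).1 ha,
    fun b hb => sInf_pos_discrepancies_le (hM b).2 hb⟩

/-- for any trim plan there is a diffusive model whose diffusive atoms are
all bounded below by the minimal nonzero discrepancy of partial sums of `μ` and `ν`. -/
theorem exists_diffusive_model_uniform_bound {X : Type*} [Fintype X] [DecidableEq X]
    (μ ν : X → ℝ) (c : X → X → ℝ) (π : X → X → ℝ)
    (hμpos : ∀ x, 0 < μ x) (hνpos : ∀ y, 0 < ν y)
    (hmass : ∑ x, μ x = ∑ y, ν y)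
    (hc : ∀ x y, 0 ≤ c x y)
    (htrim : IsTrim c μ ν π) :
    ∃ (μd μc νd νc : X → ℝ) (h₁ h₂ : X → X),
      (∀ x, 0 ≤ μd x) ∧ (∀ x, 0 ≤ μc x) ∧ (∀ y, 0 ≤ νd y) ∧ (∀ y, 0 ≤ νc y) ∧
      (∀ x, μ x = μd x + μc x) ∧ (∀ y, ν y = νd y + νc y) ∧
      (∀ x y, π x y = pushF h₁ μd x y + pushB h₂ νd x y) ∧
      (∀ a, μd a ≠ 0 →
        sInf {r | ∃ A B : Finset X,
          r = |∑ x ∈ A, μ x - ∑ y ∈ B, ν y| ∧ 0 < r} ≤ μd a) ∧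
      (∀ b, νd b ≠ 0 →
        sInf {r | ∃ A B : Finset X,
          r = |∑ x ∈ A, μ x - ∑ y ∈ B, ν y| ∧ 0 < r} ≤ νd b) :=
  exists_diffusive_model_uniform_bound_general μ ν c π htrim
end

section
/- Let μ = (1/2)δ_{(0,0)} + (1/2)δ_{(1,1)} and ν = (1/4)δ_{(−1,1)} + (3/4)δ_{(1,0)} on ℝ² with Euclidean distance cost. Then the plan π = (1/4)δ_{((0,0),(−1,1))} + (1/4)δ_{((0,0),(1,0))} + (1/2)δ_{((1,1),(1,0))} is a trim optimal plan between μ and ν, and it admits at least two distinct diffusive models (i.e., the diffusive-model decomposition of a trim plan need not be unique). -/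
open Finset

/-!
Every plan between `μ` and `ν` is determined by the mass `t ∈ [0, 1/4]` it sends from `(0,0)` to
`(-1,1)`, and its cost is `5/4 - (2 - √2) t`. Since `√2 < 2` the cost is strictly decreasing in
`t`, so `π` (the plan with `t = 1/4`) is the unique optimal plan and hence trim. Since `(0,0)`
splits its mass between two targets, a map `h₁` carries only one of the two shipments and the
other must be booked on the `ν`-side; either choice gives a diffusive model.
-/

/-- `(μᵈ, νᵈ, h₁, h₂)` is a diffusive model of `π`: `π = (Id, h₁)_# μᵈ + (h₂, Id)_# νᵈ`. -/
def IsDiffusiveModel {X : Type*} [DecidableEq X] (μ ν : X → ℝ) (π : X → X → ℝ)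
    (μd νd : X → ℝ) (h₁ h₂ : X → X) : Prop :=
  (∀ x, 0 ≤ μd x) ∧ (∀ y, 0 ≤ νd y) ∧ (∀ x, μd x ≤ μ x) ∧ (∀ y, νd y ≤ ν y) ∧
    ∀ x y, π x y = pushF h₁ μd x y + pushB h₂ νd x y

theorem IsOptimal.isTrim_of_unique {X : Type*} [Fintype X] {c : X → X → ℝ} {μ ν : X → ℝ}
    {π : X → X → ℝ} (hπ : IsOptimal c μ ν π) (huniq : ∀ π', IsOptimal c μ ν π' → π' = π) :
    IsTrim c μ ν π :=
  ⟨hπ, fun π' hπ' => (huniq π' hπ').symm ▸ le_rfl⟩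

namespace TrimExample

noncomputable def cost : Fin 4 → Fin 4 → ℝ := fun i j =>
  Real.sqrt ((![0, 1, -1, 1] i - ![0, 1, -1, 1] j) ^ 2 + (![0, 1, 1, 0] i - ![0, 1, 1, 0] j) ^ 2)

noncomputable def μ : Fin 4 → ℝ := ![1/2, 1/2, 0, 0]

noncomputable def ν : Fin 4 → ℝ := ![0, 0, 1/4, 3/4]

noncomputable def π : Fin 4 → Fin 4 → ℝ := fun i j =>
  if i = 0 ∧ j = 2 then 1/4 else if i = 0 ∧ j = 3 then 1/4 else
    if i = 1 ∧ j = 3 then 1/2 else 0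

noncomputable def planOf (t : ℝ) : Fin 4 → Fin 4 → ℝ :=
  ![![0, 0, t, 1/2 - t], ![0, 0, 1/4 - t, 1/4 + t], 0, 0]

theorem eq_planOf {p : Fin 4 → Fin 4 → ℝ} (hp : IsPlan μ ν p) :
    p = planOf (p 0 2) ∧ 0 ≤ p 0 2 ∧ p 0 2 ≤ 1/4 := by
  obtain ⟨hnonneg, hrow, hcol⟩ := hp
  have hrow₀ := hrow 0; have hrow₁ := hrow 1; have hrow₂ := hrow 2; have hrow₃ := hrow 3
  have hcol₀ := hcol 0; have hcol₁ := hcol 1; have hcol₂ := hcol 2; have hcol₃ := hcol 3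
  simp [Fin.sum_univ_four, μ, ν] at hrow₀ hrow₁ hrow₂ hrow₃ hcol₀ hcol₁ hcol₂ hcol₃
  refine ⟨funext fun i => funext fun j => ?_, hnonneg 0 2,
    by linarith [hnonneg 1 2, hnonneg 2 2, hnonneg 3 2]⟩
  fin_cases i <;> fin_cases j <;> simp [planOf] <;>
    linarith [hnonneg 0 0, hnonneg 0 1, hnonneg 0 3, hnonneg 1 0, hnonneg 1 1, hnonneg 1 3,
      hnonneg 2 0, hnonneg 2 1, hnonneg 2 2, hnonneg 2 3,
      hnonneg 3 0, hnonneg 3 1, hnonneg 3 2, hnonneg 3 3]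

theorem tcost_planOf (t : ℝ) : tcost cost (planOf t) = 5/4 - (2 - Real.sqrt 2) * t := by
  have cost₀₂ : cost 0 2 = Real.sqrt 2 := by simp [cost]; norm_num
  have cost₀₃ : cost 0 3 = 1 := by simp [cost]
  have cost₁₂ : cost 1 2 = 2 := by
    rw [show (2 : ℝ) = Real.sqrt (2 ^ 2) by simp]
    simp [cost]; norm_num
  have cost₁₃ : cost 1 3 = 1 := by simp [cost]
  simp [tcost, Fin.sum_univ_four, planOf, cost₀₂, cost₀₃, cost₁₂, cost₁₃]
  ring

theorem π_eq_planOf : π = planOf (1/4) := by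
  funext i j
  fin_cases i <;> fin_cases j <;> simp [π, planOf] <;> norm_num

theorem isPlan_planOf {t : ℝ} (h₀ : 0 ≤ t) (h₁ : t ≤ 1/4) : IsPlan μ ν (planOf t) := by
  refine ⟨fun i j => ?_, fun i => ?_, fun j => ?_⟩
  · fin_cases i <;> fin_cases j <;> simp [planOf] <;> linarith
  · fin_cases i <;> simp [planOf, μ, Fin.sum_univ_four]; ring
  · fin_cases j <;> simp [planOf, ν, Fin.sum_univ_four]; ring

theorem tcost_π_add_eq_tcost {p : Fin 4 → Fin 4 → ℝ} (hp : IsPlan μ ν p) :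
    tcost cost π + (2 - Real.sqrt 2) * (1/4 - p 0 2) = tcost cost p := by
  rw [(eq_planOf hp).1, π_eq_planOf, tcost_planOf, tcost_planOf]
  simp [planOf]
  ring

theorem isOptimal_π : IsOptimal cost μ ν π := by
  refine ⟨π_eq_planOf ▸ isPlan_planOf (by norm_num) le_rfl, fun p hp => ?_⟩
  rw [← tcost_π_add_eq_tcost hp]
  have hp₀₂ := (eq_planOf hp).2.2
  nlinarith [Real.sqrt_two_lt_three_halves]

theorem eq_π_of_isOptimal {p : Fin 4 → Fin 4 → ℝ} (hp : IsOptimal cost μ ν p) : p = π := by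
  obtain ⟨hplan, hmin⟩ := hp
  have hcost := tcost_π_add_eq_tcost hplan
  have hle := hmin π isOptimal_π.1
  obtain ⟨hp_eq, -, hp_le⟩ := eq_planOf hplan
  have hp₀₂ : p 0 2 = 1/4 := by nlinarith [Real.sqrt_two_lt_three_halves]
  rw [hp_eq, hp₀₂, π_eq_planOf]

theorem isDiffusiveModel_νd_at_three :
    IsDiffusiveModel μ ν π ![1/4, 1/2, 0, 0] ![0, 0, 0, 1/4] ![2, 3, 0, 0] fun _ => 0 := by
  refine ⟨fun x => ?_, fun y => ?_, fun x => ?_, fun y => ?_, fun x y => ?_⟩ <;>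
    [fin_cases x; fin_cases y; fin_cases x; fin_cases y; (fin_cases x <;> fin_cases y)] <;>
    simp [μ, ν, π, pushF, pushB] <;> norm_num

theorem isDiffusiveModel_νd_at_two :
    IsDiffusiveModel μ ν π ![1/4, 1/2, 0, 0] ![0, 0, 1/4, 0] ![3, 3, 0, 0] fun _ => 0 := by
  refine ⟨fun x => ?_, fun y => ?_, fun x => ?_, fun y => ?_, fun x y => ?_⟩ <;>
    [fin_cases x; fin_cases y; fin_cases x; fin_cases y; (fin_cases x <;> fin_cases y)] <;>
    simp [μ, ν, π, pushF, pushB] <;> norm_num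

end TrimExample

/-- a trim plan between
`μ = δ_{(0,0)}/2 + δ_{(1,1)}/2` and `ν = δ_{(-1,1)}/4 + 3δ_{(1,0)}/4` in `ℝ²` that
admits two distinct diffusive models. -/
theorem trim_plan_two_diffusive_models :
    letI X := Fin 4
    -- points: 0 ↦ (0,0), 1 ↦ (1,1), 2 ↦ (-1,1), 3 ↦ (1,0)
    letI ex : X → ℝ := ![0, 1, -1, 1]
    letI ey : X → ℝ := ![0, 1, 1, 0]
    letI c : X → X → ℝ := fun i j => Real.sqrt ((ex i - ex j) ^ 2 + (ey i - ey j) ^ 2)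
    letI μ : X → ℝ := ![1/2, 1/2, 0, 0]
    letI ν : X → ℝ := ![0, 0, 1/4, 3/4]
    letI π : X → X → ℝ := fun i j =>
      if i = 0 ∧ j = 2 then 1/4 else if i = 0 ∧ j = 3 then 1/4 else
        if i = 1 ∧ j = 3 then 1/2 else 0
    IsTrim c μ ν π ∧
      ∃ (μd₁ νd₁ : X → ℝ) (h₁₁ h₂₁ : X → X) (μd₂ νd₂ : X → ℝ) (h₁₂ h₂₂ : X → X),
        ((∀ x, 0 ≤ μd₁ x) ∧ (∀ y, 0 ≤ νd₁ y) ∧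
          (∀ x, μd₁ x ≤ μ x) ∧ (∀ y, νd₁ y ≤ ν y) ∧
          (∀ x y, π x y = pushF h₁₁ μd₁ x y + pushB h₂₁ νd₁ x y)) ∧
        ((∀ x, 0 ≤ μd₂ x) ∧ (∀ y, 0 ≤ νd₂ y) ∧
          (∀ x, μd₂ x ≤ μ x) ∧ (∀ y, νd₂ y ≤ ν y) ∧
          (∀ x y, π x y = pushF h₁₂ μd₂ x y + pushB h₂₂ νd₂ x y)) ∧
        (μd₁ ≠ μd₂ ∨ νd₁ ≠ νd₂) := by
  refine ⟨TrimExample.isOptimal_π.isTrim_of_unique fun _ => TrimExample.eq_π_of_isOptimal,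
    _, _, _, _, _, _, _, _, TrimExample.isDiffusiveModel_νd_at_three,
    TrimExample.isDiffusiveModel_νd_at_two, Or.inr fun h => ?_⟩
  simpa using congrFun h 3
end
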